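/- Let Ω ⊂ ℂ^d be an open convex set with 0 ∈ Ω, and suppose that for each j = 1,…,d the affine complex subspace e_j + span_ℂ{e_{j+1},…,e_d} is disjoint from Ω, where e_1,…,e_d is the standard basis. If v ∈ ℂ^d is such that the complex line ℂ·v is contained in Ω, then v = 0. In particular, Ω contains no complex affine line. -/

import Mathlib

/-- If Ω ⊂ ℂ^d is open convex with 0 ∈ Ω and each affine subspace
e_j + span_ℂ{e_{j+1},…,e_d} is disjoint from Ω, then any v with ℂ·v ⊆ Ω is zero;
in particular Ω contains no complex affine line. -/
theorem stmt6 {d : ℕ} (Ω : Set (EuclideanSpace ℂ (Fin d))) (hΩ : IsOpen Ω)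
    (hconv : Convex ℝ Ω) (h0 : (0 : EuclideanSpace ℂ (Fin d)) ∈ Ω)
    (hflag : ∀ j : Fin d, ∀ w ∈ Submodule.span ℂ
      ((fun k : Fin d => EuclideanSpace.single k (1 : ℂ)) '' {k | j < k}),
      EuclideanSpace.single j (1 : ℂ) + w ∉ Ω) :
    (∀ v : EuclideanSpace ℂ (Fin d), (∀ c : ℂ, c • v ∈ Ω) → v = 0) ∧
    ¬ ∃ (a v : EuclideanSpace ℂ (Fin d)), v ≠ 0 ∧ ∀ c : ℂ, a + c • v ∈ Ω := by
  classical
  have key : ∀ v : EuclideanSpace ℂ (Fin d), (∀ c : ℂ, c • v ∈ Ω) → v = 0 := by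
    intro v hv
    by_contra hv0
    have hex : ∃ k : Fin d, v k ≠ 0 := by
      by_contra h
      push_neg at h
      exact hv0 (by ext k; exact h k)
    let S : Finset (Fin d) := Finset.univ.filter fun k => v k ≠ 0
    have hS : S.Nonempty := ⟨hex.choose, by simp [S, hex.choose_spec]⟩
    set j := S.min' hS with hj
    have hvj : v j ≠ 0 := by have := S.min'_mem hS; simpa [S] using this
    have hlt : ∀ k, k < j → v k = 0 := by
      intro k hk
      by_contra h
      exact absurd (S.min'_le k (by simp [S, h])) (not_le.mpr hk)
    set c := (v j)⁻¹ with hc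
    set w : EuclideanSpace ℂ (Fin d) := c • v - EuclideanSpace.single j 1 with hw
    have hwk : ∀ k, k ≤ j → w k = 0 := by
      intro k hk
      rcases lt_or_eq_of_le hk with h | h
      · simp [hw, hc, hlt k h, EuclideanSpace.single_apply, h.ne]
      · subst h; simp [hw, hc, inv_mul_cancel₀ hvj]
    have hwmem : w ∈ Submodule.span ℂ
        ((fun k : Fin d => EuclideanSpace.single k (1 : ℂ)) '' {k | j < k}) := by
      have hrep : w = ∑ k : Fin d, (w k) • EuclideanSpace.single k (1 : ℂ) := by
        ext i
        have : (∑ x : Fin d, w x • EuclideanSpace.single x (1 : ℂ)) i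
            = ∑ x : Fin d, (w x • EuclideanSpace.single x (1 : ℂ)) i :=
          by rw [WithLp.ofLp_sum]; exact Finset.sum_apply i Finset.univ _
        rw [this]
        simp [EuclideanSpace.single_apply]
      rw [hrep]
      refine Submodule.sum_mem _ fun k _ => ?_
      rcases le_or_gt k j with h | h
      · simp [hwk k h]
      · exact Submodule.smul_mem _ _ (Submodule.subset_span ⟨k, h, rfl⟩)
    refine hflag j w hwmem ?_
    have heq : EuclideanSpace.single j (1 : ℂ) + w = c • v := by
      rw [hw]; abel
    rw [heq]
    exact hv c
  refine ⟨key, ?_⟩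
  rintro ⟨a, v, hv0, hline⟩
  refine hv0 (key v fun c => ?_)
  have hcl : (2 * c) • v ∈ closure Ω := by
    have hmem : ∀ n : ℕ, (((n : ℝ) + 1)⁻¹) • a + (2 * c) • v ∈ Ω := by
      intro n
      set t : ℝ := ((n : ℝ) + 1)⁻¹ with ht
      have ht0 : 0 < t := by positivity
      have ht1 : t ≤ 1 := by
        rw [ht]
        apply inv_le_one_of_one_le₀
        linarith [Nat.cast_nonneg (α := ℝ) n]
      have htne : (t : ℂ) ≠ 0 := by
        exact_mod_cast ne_of_gt ht0
      have := hconv (a := t) (b := 1 - t) (hline ((2 * c) / (t : ℂ))) h0 (le_of_lt ht0)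
        (by linarith) (by ring)
      have haux : t • (((2 * c) / (t : ℂ)) • v) = (2 * c) • v := by
        rw [← Complex.coe_smul, smul_smul]
        congr 1
        field_simp
      have hsm : t • (a + ((2 * c) / (t : ℂ)) • v) + (1 - t) • (0 : EuclideanSpace ℂ (Fin d))
          = t • a + (2 * c) • v := by
        rw [smul_zero, add_zero, smul_add, haux]
      rwa [hsm] at this
    have htend : Filter.Tendsto (fun n : ℕ => (((n : ℝ) + 1)⁻¹) • a + (2 * c) • v)
        Filter.atTop (nhds ((2 * c) • v)) := by
      have h1 : Filter.Tendsto (fun n : ℕ => (((n : ℝ) + 1)⁻¹)) Filter.atTop (nhds 0) :=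
        tendsto_one_div_add_atTop_nhds_zero_nat.congr (by intro n; simp [one_div])
      have := (h1.smul_const a).add (tendsto_const_nhds (x := (2 * c) • v))
      simpa using this
    exact mem_closure_of_tendsto htend (Filter.Eventually.of_forall hmem)
  have := hconv.combo_interior_closure_mem_interior (x := 0) (y := (2 * c) • v)
    (by rwa [hΩ.interior_eq]) hcl (a := (1:ℝ)/2) (b := (1:ℝ)/2) (by norm_num) (by norm_num)
    (by norm_num)
  rw [hΩ.interior_eq] at this
  have heq : ((1:ℝ)/2) • (0 : EuclideanSpace ℂ (Fin d)) + ((1:ℝ)/2) • ((2 * c) • v) = c • v := by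
    rw [smul_zero, zero_add, ← Complex.coe_smul, smul_smul]
    congr 1
    push_cast
    ring
  rwa [heq] at this
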